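/- arXiv:2411.09064 — 2 statements merged into one kernel-verified Lean document; each statement's English description precedes it below -/
import Mathlib

section
/- Let p_Y, p_Z be probability vectors in ℝ^k, let b = max{‖p_Y‖₂², ‖p_Z‖₂²}, and let α_bf ∈ (0,1), s_bf > 0 with α_bf·p_{Y,m} + s_bf < 1 for all m. Then ∑_{m=1}^k (α_bf·p_{Y,m}+s_bf)(1-α_bf·p_{Y,m}-s_bf)·(p_{Y,m} - p_{Z,m})² ≤ α_bf·b^{1/2}·‖p_Y - p_Z‖₂² + s_bf·‖p_Y - p_Z‖₂². -/
/-- Variance-weighted squared-difference bound for RAPPOR: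
`∑_m (α_bf p_{Y,m}+s_bf)(1-α_bf p_{Y,m}-s_bf)(p_{Y,m}-p_{Z,m})²
  ≤ α_bf √b ‖p_Y-p_Z‖₂² + s_bf ‖p_Y-p_Z‖₂²` where `b = max{‖p_Y‖₂², ‖p_Z‖₂²}`. -/
theorem stmt_6 (k : ℕ) (pY pZ : Fin k → ℝ)
    (hY0 : ∀ m, 0 ≤ pY m) (hY1 : ∑ m, pY m = 1)
    (hZ0 : ∀ m, 0 ≤ pZ m) (hZ1 : ∑ m, pZ m = 1)
    (b : ℝ) (hb : b = max (∑ m, pY m ^ 2) (∑ m, pZ m ^ 2))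
    (αbf sbf : ℝ) (hα0 : 0 < αbf) (hα1 : αbf < 1) (hs : 0 < sbf)
    (hlt : ∀ m, αbf * pY m + sbf < 1) :
    ∑ m, (αbf * pY m + sbf) * (1 - αbf * pY m - sbf) * (pY m - pZ m) ^ 2 ≤
      αbf * Real.sqrt b * ∑ m, (pY m - pZ m) ^ 2 +
        sbf * ∑ m, (pY m - pZ m) ^ 2 := by
  have key : ∀ m, (αbf * pY m + sbf) * (1 - αbf * pY m - sbf) * (pY m - pZ m) ^ 2 ≤
      (αbf * Real.sqrt b + sbf) * (pY m - pZ m) ^ 2 := by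
    intro m
    have hp := hY0 m
    have hpb : pY m ≤ Real.sqrt b := by
      have h1 : pY m ^ 2 ≤ ∑ j, pY j ^ 2 :=
        Finset.single_le_sum (f := fun j => pY j ^ 2) (fun j _ => sq_nonneg _) (Finset.mem_univ m)
      have h2 : pY m ^ 2 ≤ b := h1.trans (hb ▸ le_max_left _ _)
      calc pY m = Real.sqrt (pY m ^ 2) := by rw [Real.sqrt_sq hp]
        _ ≤ Real.sqrt b := Real.sqrt_le_sqrt h2
    have h1 : (αbf * pY m + sbf) * (1 - αbf * pY m - sbf) ≤ αbf * Real.sqrt b + sbf := by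
      nlinarith [hlt m, mul_nonneg hα0.le hp, hs.le]
    exact mul_le_mul_of_nonneg_right h1 (sq_nonneg _)
  calc ∑ m, (αbf * pY m + sbf) * (1 - αbf * pY m - sbf) * (pY m - pZ m) ^ 2
      ≤ ∑ m, (αbf * Real.sqrt b + sbf) * (pY m - pZ m) ^ 2 :=
        Finset.sum_le_sum fun m _ => key m
    _ = αbf * Real.sqrt b * ∑ m, (pY m - pZ m) ^ 2 + sbf * ∑ m, (pY m - pZ m) ^ 2 := by
        rw [← Finset.mul_sum, add_mul]
end

section
/- Let p_Y be a probability vector with k categories, p_Z the uniform vector (1/k,…,1/k), α > 0, and w = (e^α - 1)/(e^α + k - 1). Define p̃_Y = w·p_Y + (1-w)·p_Z, the distribution of the generalized randomized response output. If p_{Y,m} = 1/k + (-1)^m·ε/√k for even k, then p̃_{Y,m} = 1/k + (-1)^m·w·ε/√k, and consequently ‖p̃_Y - p_Z‖₂ = w·ε, and with Σ = diag(p̃_Y) - p̃_Y p̃_Yᵀ, the quadratic form (p̃_Y - p_Z)ᵀ Σ (p̃_Y - p_Z) = w²ε²/k - w⁴ε⁴. -/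
/-- Generalized randomized response on a perturbed uniform alternative: with
`w = (e^α - 1)/(e^α + k - 1)`, `p_Z` uniform, `p_{Y,m} = 1/k + (-1)^m·ε/√k` for even `k`,
and `p̃_Y = w·p_Y + (1-w)·p_Z`, one has `p̃_{Y,m} = 1/k + (-1)^m·w·ε/√k`,
`‖p̃_Y - p_Z‖₂ = w·ε`, and with `Σ = diag(p̃_Y) - p̃_Y p̃_Yᵀ`,
`(p̃_Y - p_Z)ᵀ Σ (p̃_Y - p_Z) = w²ε²/k - w⁴ε⁴`. -/
theorem stmt_19 (k : ℕ) (hk : 2 ≤ k) (hke : Even k)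
    (α ε : ℝ) (hα : 0 < α) (hε : 0 < ε)
    (w : ℝ) (hw : w = (Real.exp α - 1) / (Real.exp α + k - 1))
    (pY pZ ptY : Fin k → ℝ)
    (hpY : ∀ m : Fin k, pY m = 1 / k + (-1 : ℝ) ^ (m : ℕ) * ε / Real.sqrt k)
    (hpZ : ∀ m, pZ m = 1 / k)
    (hptY : ∀ m, ptY m = w * pY m + (1 - w) * pZ m)
    (hprob : ∀ m, 0 ≤ pY m) :
    (∀ m : Fin k, ptY m = 1 / k + (-1 : ℝ) ^ (m : ℕ) * w * ε / Real.sqrt k) ∧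
    Real.sqrt (∑ m, (ptY m - pZ m) ^ 2) = w * ε ∧
    (∑ m, ptY m * (ptY m - pZ m) ^ 2) - (∑ m, ptY m * (ptY m - pZ m)) ^ 2 =
      w ^ 2 * ε ^ 2 / k - w ^ 4 * ε ^ 4 := by
  have hk0 : (0:ℝ) < k := by positivity
  have hkne : (k:ℝ) ≠ 0 := ne_of_gt hk0
  have hs0 : 0 < Real.sqrt k := Real.sqrt_pos.mpr hk0
  have hsne : Real.sqrt k ≠ 0 := ne_of_gt hs0
  have hsk : (Real.sqrt k) ^ 2 = k := Real.sq_sqrt hk0.le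
  have hw0 : 0 ≤ w := by
    rw [hw]
    have h1 : (1:ℝ) < Real.exp α := by
      rw [← Real.exp_zero]; exact Real.exp_lt_exp.mpr hα
    have h2 : (0:ℝ) < Real.exp α + k - 1 := by linarith
    exact div_nonneg (by linarith) h2.le
  have halt : ∑ m : Fin k, ((-1:ℝ)) ^ (m : ℕ) = 0 := by
    rw [Fin.sum_univ_eq_sum_range, neg_one_geom_sum, if_pos hke]
  have hpt : ∀ m : Fin k, ptY m = 1 / k + (-1 : ℝ) ^ (m : ℕ) * w * ε / Real.sqrt k := by
    intro m
    rw [hptY, hpY, hpZ]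
    ring
  have hsgn : ∀ m : Fin k, ((-1:ℝ) ^ (m : ℕ)) ^ 2 = 1 := by
    intro m
    rw [← pow_mul, mul_comm, pow_mul, neg_one_sq, one_pow]
  refine ⟨hpt, ?_, ?_⟩
  · have h1 : ∑ m, (ptY m - pZ m) ^ 2 = (w * ε) ^ 2 := by
      have : ∀ m : Fin k, (ptY m - pZ m) ^ 2 = w ^ 2 * ε ^ 2 / k := by
        intro m
        rw [hpt, hpZ]
        have : (1 / (k:ℝ) + (-1:ℝ) ^ (m:ℕ) * w * ε / Real.sqrt k - 1 / k) ^ 2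
            = ((-1:ℝ) ^ (m:ℕ)) ^ 2 * w ^ 2 * ε ^ 2 / (Real.sqrt k) ^ 2 := by ring
        rw [this, hsgn, hsk, one_mul]
      rw [Finset.sum_congr rfl (fun m _ => this m), Finset.sum_const, Finset.card_univ,
        Fintype.card_fin, nsmul_eq_mul]
      field_simp
    rw [h1, Real.sqrt_sq (by positivity)]
  · have hd : ∀ m : Fin k, ptY m - pZ m = (-1:ℝ) ^ (m:ℕ) * (w * ε / Real.sqrt k) := by
      intro m; rw [hpt, hpZ]; ring
    have hA : ∑ m, ptY m * (ptY m - pZ m) ^ 2 = w ^ 2 * ε ^ 2 / k := by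
      have heq : ∀ m : Fin k, ptY m * (ptY m - pZ m) ^ 2
          = w ^ 2 * ε ^ 2 / k ^ 2 + (-1:ℝ) ^ (m:ℕ) * (w ^ 3 * ε ^ 3 / (k * Real.sqrt k)) := by
        intro m
        rw [hd, hpt]
        have e1 : (1 / (k:ℝ) + (-1:ℝ) ^ (m:ℕ) * w * ε / Real.sqrt k) *
            ((-1:ℝ) ^ (m:ℕ) * (w * ε / Real.sqrt k)) ^ 2
            = ((-1:ℝ)^(m:ℕ))^2 * (w^2*ε^2/(k * (Real.sqrt k)^2))
              + ((-1:ℝ)^(m:ℕ))^2 * (-1:ℝ)^(m:ℕ) * (w^3*ε^3/(Real.sqrt k)^3) := by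
          ring
        rw [e1, hsgn, one_mul, one_mul, hsk]
        have : (Real.sqrt k) ^ 3 = k * Real.sqrt k := by
          rw [pow_succ, hsk]
        rw [this]
        ring
      rw [Finset.sum_congr rfl (fun m _ => heq m), Finset.sum_add_distrib,
        Finset.sum_const, Finset.card_univ, Fintype.card_fin, nsmul_eq_mul,
        ← Finset.sum_mul, halt, zero_mul, add_zero]
      field_simp
    have hB : ∑ m, ptY m * (ptY m - pZ m) = w ^ 2 * ε ^ 2 := by
      have heq : ∀ m : Fin k, ptY m * (ptY m - pZ m)
          = w ^ 2 * ε ^ 2 / k + (-1:ℝ) ^ (m:ℕ) * (w * ε / (k * Real.sqrt k)) := by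
        intro m
        rw [hd, hpt]
        have e1 : (1 / (k:ℝ) + (-1:ℝ) ^ (m:ℕ) * w * ε / Real.sqrt k) *
            ((-1:ℝ) ^ (m:ℕ) * (w * ε / Real.sqrt k))
            = (-1:ℝ)^(m:ℕ) * (w*ε/(k * Real.sqrt k))
              + ((-1:ℝ)^(m:ℕ))^2 * (w^2*ε^2/(Real.sqrt k)^2) := by
          ring
        rw [e1, hsgn, one_mul, hsk]
        ring
      rw [Finset.sum_congr rfl (fun m _ => heq m), Finset.sum_add_distrib,
        Finset.sum_const, Finset.card_univ, Fintype.card_fin, nsmul_eq_mul,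
        ← Finset.sum_mul, halt, zero_mul, add_zero]
      field_simp
    rw [hA, hB]
    ring
end
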